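/- If the linear term dS = ⟨g(w), dg(w, dw)⟩ of the Taylor expansion of S at w in the direction dw is strictly negative, then the norm of the backpropagated gradient decreases after the weight correction: there exists ε > 0 such that for all t with 0 < t < ε, ‖g(w + t·dw)‖ < ‖g(w)‖. (Decrease direction of Theorem 1 of the paper.) -/

import Mathlib

/-!
Along the line `t ↦ w + t • dw` the product `g` is differentiated by the Leibniz rule for
ordered products, so its derivative at `t = 0` is `dg(w, dw)`. Hence `t ↦ ‖g‖²` has derivative
`2 ⟪g(w), dg(w, dw)⟫ < 0` at `0`, and the norm strictly decreases for small `t > 0`.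
-/

open Matrix

/-- The embedding of `n → ℝ` into `EuclideanSpace ℝ n`, so that `‖euc x‖` is the
Euclidean norm of `x`. -/
noncomputable def euc {n : Type*} [Fintype n] (x : n → ℝ) : EuclideanSpace ℝ n :=
  (EuclideanSpace.equiv n ℝ).symm x

/-- The backpropagated gradient vector `g(w) = D₁·w·D₂·w ⋯ D_h·w·δ`. -/
noncomputable def gVec {n : Type*} [Fintype n] [DecidableEq n] {h : ℕ}
    (D : Fin h → Matrix n n ℝ) (δ : n → ℝ) (w : Matrix n n ℝ) : n → ℝ :=
  (List.ofFn fun i : Fin h => D i * w).prod *ᵥ δ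

/-- The vector `dg(w, dw) = Σ_{i=1}^{h} D₁·w ⋯ Dᵢ·dw ⋯ D_h·w·δ`, obtained from
`g(w)` by replacing the `i`-th occurrence of `w` by `dw` and summing over `i`. -/
noncomputable def dgVec {n : Type*} [Fintype n] [DecidableEq n] {h : ℕ}
    (D : Fin h → Matrix n n ℝ) (δ : n → ℝ) (w dw : Matrix n n ℝ) : n → ℝ :=
  ∑ i : Fin h,
    (List.ofFn fun j : Fin h => if j = i then D j * dw else D j * w).prod *ᵥ δ

open Filter Topology

theorem HasDerivAt.list_ofFn_prod {𝕜 R : Type*} [NontriviallyNormedField 𝕜] [NormedRing R]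
    [NormedAlgebra 𝕜 R] {h : ℕ} {f : Fin h → 𝕜 → R} {f' : Fin h → R} {x : 𝕜}
    (hf : ∀ i, HasDerivAt (f i) (f' i) x) :
    HasDerivAt (fun t => (List.ofFn fun i => f i t).prod)
      (∑ i, (List.ofFn fun j => if j = i then f' j else f j x).prod) x := by
  induction h with
  | zero => simpa using hasDerivAt_const x (1 : R)
  | succ h ih =>
    simp only [List.ofFn_succ, List.prod_cons]
    refine ((hf 0).mul (ih fun i => hf i.succ)).congr_deriv ?_
    simp [Fin.sum_univ_succ, Finset.mul_sum, Fin.succ_ne_zero, (Fin.succ_ne_zero _).symm]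

theorem eventually_norm_lt_of_hasDerivAt_of_inner_neg {F : Type*} [NormedAddCommGroup F]
    [InnerProductSpace ℝ F] {f : ℝ → F} {f' : F} {x : ℝ} (hf : HasDerivAt f f' x)
    (hneg : inner ℝ (f x) f' < 0) : ∀ᶠ t in 𝓝[>] x, ‖f t‖ < ‖f x‖ := by
  have hslope : Tendsto (slope (‖f ·‖ ^ 2) x) (𝓝[>] x) (𝓝 (2 * inner ℝ (f x) f')) :=
    (hasDerivAt_iff_tendsto_slope.mp hf.norm_sq).mono_left (nhdsGT_le_nhdsNE x)
  filter_upwards [hslope.eventually_lt_const (show 2 * inner ℝ (f x) f' < 0 by linarith),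
    self_mem_nhdsWithin] with t hneg_slope (hxt : x < t)
  rw [slope_def_field, div_lt_iff₀ (sub_pos.mpr hxt), zero_mul, sub_neg] at hneg_slope
  exact (pow_lt_pow_iff_left₀ (norm_nonneg _) (norm_nonneg _) two_ne_zero).mp hneg_slope

section
-- Any norm would do: it only makes `Matrix n n ℝ` a normed algebra for the product rule.
attribute [local instance] Matrix.linftyOpNormedRing Matrix.linftyOpNormedAlgebra

theorem hasDerivAt_gVec_add_smul {n : Type*} [Fintype n] [DecidableEq n] {h : ℕ}
    (D : Fin h → Matrix n n ℝ) (δ : n → ℝ) (w dw : Matrix n n ℝ) :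
    HasDerivAt (fun t : ℝ => euc (gVec D δ (w + t • dw))) (euc (dgVec D δ w dw)) 0 := by
  have hfactor (i : Fin h) : HasDerivAt (fun t : ℝ => D i * (w + t • dw)) (D i * dw) 0 := by
    have := (((hasDerivAt_id (0 : ℝ)).smul_const dw).const_add w).const_mul (D i)
    exact this.congr_deriv (by simp)
  let L : Matrix n n ℝ →L[ℝ] EuclideanSpace ℝ n :=
    (EuclideanSpace.equiv n ℝ).symm.toContinuousLinearMap.comp
      ((Matrix.mulVecBilin ℝ ℝ).flip δ).toContinuousLinearMap
  have hfun : (fun t : ℝ => euc (gVec D δ (w + t • dw)))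
      = L ∘ fun t => (List.ofFn fun i => D i * (w + t • dw)).prod := by
    ext t : 1
    simp [L, gVec, euc]
  rw [hfun]
  refine (L.hasFDerivAt.comp_hasDerivAt (0 : ℝ) (HasDerivAt.list_ofFn_prod hfactor)).congr_deriv ?_
  refine (map_sum L _ _).trans ?_
  simp [L, dgVec, euc]
end

theorem norm_decreases_of_dS_neg_general
    {n : Type*} [Fintype n] [DecidableEq n] (h : ℕ)
    (D : Fin h → Matrix n n ℝ) (δ : n → ℝ)
    (w dw : Matrix n n ℝ)
    (hneg : (0 : ℝ) > inner ℝ (euc (gVec D δ w)) (euc (dgVec D δ w dw))) :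
    ∃ ε > (0 : ℝ), ∀ t : ℝ, 0 < t → t < ε →
      ‖euc (gVec D δ (w + t • dw))‖ < ‖euc (gVec D δ w)‖ := by
  have hdecr := eventually_norm_lt_of_hasDerivAt_of_inner_neg
    (hasDerivAt_gVec_add_smul D δ w dw) (by simpa using hneg)
  obtain ⟨ε, hε, hsub⟩ := mem_nhdsGT_iff_exists_Ioo_subset.mp hdecr
  exact ⟨ε, hε, fun t ht htε => by simpa using hsub ⟨ht, htε⟩⟩

/-- **Theorem 1 (decrease direction).** If the linear term
`dS = ⟨g(w), dg(w, dw)⟩` of the Taylor expansion of `S` at `w` in the direction `dw`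
is strictly negative, then the norm of the backpropagated gradient decreases after
the weight correction: there exists `ε > 0` such that for all `0 < t < ε`,
`‖g(w + t·dw)‖ < ‖g(w)‖`. -/
theorem norm_decreases_of_dS_neg
    {n : Type*} [Fintype n] [DecidableEq n] (h : ℕ) (hh : 1 ≤ h)
    (D : Fin h → Matrix n n ℝ) (hD : ∀ i, (D i).IsDiag) (δ : n → ℝ)
    (w dw : Matrix n n ℝ)
    (hneg : (0 : ℝ) > inner ℝ (euc (gVec D δ w)) (euc (dgVec D δ w dw))) :
    ∃ ε > (0 : ℝ), ∀ t : ℝ, 0 < t → t < ε →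
      ‖euc (gVec D δ (w + t • dw))‖ < ‖euc (gVec D δ w)‖ :=
  norm_decreases_of_dS_neg_general h D δ w dw hneg
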